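/- Let P be a partial order on [m] with L = J(P) a natural distributive lattice, let G be a graph on [m] containing the minimal graph of L, and let K be a field. In the polynomial ring K[c_C : C ∈ C(G)], with one variable for each clique C of G (including the empty clique), the family of monomials { ∏_{C ∈ C(G), C ⊆ S} c_C : S ∈ C(G)̄ }, indexed by the distinct order-ideal closures S of cliques of G, is algebraically independent over K. -/

import Mathlib

open scoped BigOperators
attribute [local instance] Classical.propDecidable

noncomputable section

/-- The order ideals of a partial order `P` on `Fin m`. -/
def orderIdeals {m : ℕ} (P : PartialOrder (Fin m)) : Set (Finset (Fin m)) :=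
  {S | ∀ t ∈ S, ∀ s, P.le s t → s ∈ S}

/-- `i` covers `j` in the partial order `P`. -/
def Covers {m : ℕ} (P : PartialOrder (Fin m)) (i j : Fin m) : Prop :=
  P.lt j i ∧ ∀ r, ¬ (P.lt j r ∧ P.lt r i)

/-- The minimal graph of a natural lattice `L = J(P)`: edges are the cover relations of `P`. -/
def minimalGraph {m : ℕ} (P : PartialOrder (Fin m)) : SimpleGraph (Fin m) where
  Adj i j := Covers P i j ∨ Covers P j i
  symm := ⟨by intro i j h; tauto⟩
  loopless := ⟨by
    intro i h
    rcases h with h | h <;>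
      exact absurd h.1 (@lt_irrefl (Fin m) P.toPreorder i)⟩

/-- The order ideal of `P` generated by `S`: all elements lying below some element of `S`. -/
def orderIdealClosure {m : ℕ} (P : PartialOrder (Fin m)) (S : Finset (Fin m)) :
    Finset (Fin m) :=
  Finset.univ.filter (fun s => ∃ t ∈ S, P.le s t)

/-- The set of order-ideal closures of cliques of `G`. -/
def cliqueClosures {m : ℕ} (P : PartialOrder (Fin m)) (G : SimpleGraph (Fin m)) :
    Set (Finset (Fin m)) :=
  {S | ∃ C : Finset (Fin m), G.IsClique (C : Set (Fin m)) ∧ S = orderIdealClosure P C}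

/-- A set is contained in its order-ideal closure. -/
lemma subset_orderIdealClosure {m : ℕ} (P : PartialOrder (Fin m)) (C : Finset (Fin m)) :
    C ⊆ orderIdealClosure P C := by
  intro t ht
  simp only [orderIdealClosure, Finset.mem_filter, Finset.mem_univ, true_and]
  exact ⟨t, ht, P.le_refl t⟩

/-- If a clique closure `S` contains `C`, it contains the closure of `C`. -/
lemma orderIdealClosure_subset_of_subset {m : ℕ} (P : PartialOrder (Fin m))
    {G : SimpleGraph (Fin m)} {S : Finset (Fin m)} (hS : S ∈ cliqueClosures P G)
    {C : Finset (Fin m)} (hCS : C ⊆ S) : orderIdealClosure P C ⊆ S := by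
  obtain ⟨C', -, rfl⟩ := hS
  intro x hx
  simp only [orderIdealClosure, Finset.mem_filter, Finset.mem_univ, true_and] at hx ⊢
  obtain ⟨t, htC, hxt⟩ := hx
  have := hCS htC
  simp only [orderIdealClosure, Finset.mem_filter, Finset.mem_univ, true_and] at this
  obtain ⟨u, huC', htu⟩ := this
  exact ⟨u, huC', P.le_trans _ _ _ hxt htu⟩

open MvPolynomial

lemma prod_X_eq_monomial' {τ K : Type*} [Field K] (s : Finset τ) :
    ∏ C ∈ s, (X C : MvPolynomial τ K) = monomial (∑ C ∈ s, Finsupp.single C 1) 1 := by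
  classical
  induction s using Finset.induction with
  | empty => simp
  | insert _ _ h ih =>
      rw [Finset.prod_insert h, ih, Finset.sum_insert h, X, monomial_mul, one_mul]

open MvPolynomial in
/-- In the polynomial ring with one variable `c C` for each clique `C` of `G`, the
monomials `∏_{C clique of G, C ⊆ S} c C`, indexed by the distinct order-ideal closures
`S` of cliques of `G`, are algebraically independent over `K`. -/
theorem cliqueClosure_monomials_algebraically_independent
    (m : ℕ) (P : PartialOrder (Fin m)) (G : SimpleGraph (Fin m))
    (hmin : minimalGraph P ≤ G) (K : Type*) [Field K] :
    AlgebraicIndependent K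
      (fun S : ↥(cliqueClosures P G) =>
        ∏ C ∈ Finset.univ.filter
            (fun C : {C : Finset (Fin m) // G.IsClique (C : Set (Fin m))} =>
              (C : Finset (Fin m)) ⊆ (S : Finset (Fin m))),
          (X C : MvPolynomial {C : Finset (Fin m) // G.IsClique (C : Set (Fin m))} K)) := by
  classical
  set τ := {C : Finset (Fin m) // G.IsClique (C : Set (Fin m))} with hτ
  set ι := ↥(cliqueClosures P G) with hι
  -- exponent vectors
  set v : ι → (τ →₀ ℕ) := fun S =>
    ∑ C ∈ Finset.univ.filter (fun C : τ => (C : Finset (Fin m)) ⊆ (S : Finset (Fin m))),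
      Finsupp.single C 1 with hv
  have hvapply : ∀ (S : ι) (C : τ),
      v S C = if (C : Finset (Fin m)) ⊆ (S : Finset (Fin m)) then 1 else 0 := by
    intro S C
    rw [hv]
    rw [Finset.sum_apply']
    simp only [Finsupp.single_apply]
    rw [Finset.sum_ite_eq' _ C (fun _ => 1)]
    simp
  set f : ι → MvPolynomial τ K := fun S =>
    ∏ C ∈ Finset.univ.filter (fun C : τ => (C : Finset (Fin m)) ⊆ (S : Finset (Fin m))),
      (X C : MvPolynomial τ K) with hf
  have hfmon : ∀ S : ι, f S = monomial (v S) 1 := fun S => prod_X_eq_monomial' _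
  -- the exponent-summing map
  set w : ((ι →₀ ℕ)) → (τ →₀ ℕ) := fun d => d.sum fun S k => k • v S with hw
  -- aeval f is mapDomain w
  have key : ∀ p : MvPolynomial ι K, aeval f p = AddMonoidAlgebra.mapDomain w p := by
    intro p
    induction p using MvPolynomial.induction_on' with
    | add p q hp hq =>
        rw [map_add, hp, hq]
        exact (AddMonoidAlgebra.mapDomain_add _ _ _).symm
    | monomial d a =>
        have h2 : AddMonoidAlgebra.mapDomain w (monomial d a) = (monomial (w d) a : MvPolynomial τ K) := by
          rw [← single_eq_monomial, ← single_eq_monomial]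
          exact AddMonoidAlgebra.mapDomain_single
        rw [aeval_monomial, h2, hw]
        rw [monomial_finsupp_sum_index, algebraMap_eq]
        congr 1
        apply Finsupp.prod_congr
        intro S _
        rw [hfmon, monomial_pow, one_pow]
  -- injectivity of w
  have winj : Function.Injective w := by
    intro d d' hdd'
    by_contra hne
    set A : Finset ι := d.support ∪ d'.support with hA
    set T : Finset ι := A.filter (fun S => d S ≠ d' S) with hT
    have hTmem : ∀ S : ι, d S ≠ d' S → S ∈ T := by
      intro S hS
      rw [hT, Finset.mem_filter]
      refine ⟨?_, hS⟩
      rw [hA, Finset.mem_union, Finsupp.mem_support_iff, Finsupp.mem_support_iff]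
      by_contra hc
      push_neg at hc
      exact hS (hc.1.trans hc.2.symm)
    have hTne : (↑T : Set ι).Nonempty := by
      obtain ⟨S, hS⟩ := Finsupp.ne_iff.mp hne
      exact ⟨S, hTmem S hS⟩
    obtain ⟨S₀, hS₀T, hS₀max⟩ := Set.Finite.exists_maximalFor
      (fun S : ι => (S : Finset (Fin m))) (↑T : Set ι) T.finite_toSet hTne
    have hdS₀ : d S₀ ≠ d' S₀ := (Finset.mem_filter.mp hS₀T).2
    obtain ⟨C, hCcl, hS₀eq⟩ := S₀.2
    set Cτ : τ := ⟨C, hCcl⟩ with hCτ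
    -- evaluate w d and w d' at Cτ
    have heval : ∀ e : ι →₀ ℕ, e.support ⊆ A → w e Cτ =
        ∑ S ∈ A, e S * (if C ⊆ (S : Finset (Fin m)) then 1 else 0) := by
      intro e he
      have h0 : (w e) Cτ = ∑ S ∈ e.support, e S * (v S Cτ) := by
        rw [hw]
        rw [Finsupp.sum_apply, Finsupp.sum]
        apply Finset.sum_congr rfl
        intro S _
        rw [Finsupp.smul_apply, smul_eq_mul]
      rw [h0, Finset.sum_subset he
        (fun S _ hS => by rw [Finsupp.notMem_support_iff.mp hS, zero_mul])]
      apply Finset.sum_congr rfl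
      intro S _
      rw [hvapply S Cτ]
    have h3 := congrArg (fun g : τ →₀ ℕ => g Cτ) hdd'
    change w d Cτ = w d' Cτ at h3
    rw [heval d Finset.subset_union_left, heval d' Finset.subset_union_right] at h3
    have hS₀A : S₀ ∈ A := (Finset.mem_filter.mp hS₀T).1
    rw [← Finset.sum_erase_add _ _ hS₀A, ← Finset.sum_erase_add _ _ hS₀A] at h3
    have hcong : ∑ S ∈ A.erase S₀, d S * (if C ⊆ (S : Finset (Fin m)) then 1 else 0)
        = ∑ S ∈ A.erase S₀, d' S * (if C ⊆ (S : Finset (Fin m)) then 1 else 0) := by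
      apply Finset.sum_congr rfl
      intro S hS
      have hSne : S ≠ S₀ := Finset.ne_of_mem_erase hS
      by_cases hCS : C ⊆ (S : Finset (Fin m))
      · have hsub : (S₀ : Finset (Fin m)) ⊆ (S : Finset (Fin m)) := by
          rw [hS₀eq]
          exact orderIdealClosure_subset_of_subset P S.2 hCS
        have hdS : d S = d' S := by
          by_contra hc
          have := hS₀max (j := S) (hTmem S hc) hsub
          exact hSne (Subtype.ext (Finset.Subset.antisymm this hsub))
        rw [hdS]
      · simp [hCS]
    rw [hcong] at h3
    have h4 := add_left_cancel h3
    have hCsub : C ⊆ (S₀ : Finset (Fin m)) := by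
      rw [hS₀eq]; exact subset_orderIdealClosure P C
    rw [if_pos hCsub, mul_one, mul_one] at h4
    exact hdS₀ h4
  -- conclude
  have : (fun S : ι =>
      ∏ C ∈ Finset.univ.filter (fun C : τ => (C : Finset (Fin m)) ⊆ (S : Finset (Fin m))),
        (X C : MvPolynomial τ K)) = f := rfl
  rw [AlgebraicIndependent]
  intro p q hpq
  have h5 : AddMonoidAlgebra.mapDomain w p = AddMonoidAlgebra.mapDomain w q := by
    rw [← key p, ← key q]; exact hpq
  exact AddMonoidAlgebra.mapDomain_injective winj h5

end
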